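/- arXiv:1903.01633 — 8 statements merged into one kernel-verified Lean document; each statement's English description precedes it below -/
import Mathlib

section
/- For the Gamma PML objective l(β) = Σ_i [−α y_i exp(−x_iβ) − α x_iβ], if there exists a nonzero vector γ with z_i = x_iγ ≥ 0 for all i with y_i > 0 and Σ_i z_i < 0, then l(β + kγ) is strictly increasing in k for all k large, so no finite maximizer exists. -/
/-- Gamma PML non-existence: if z = Xγ ≥ 0 on observations with y > 0 and
Σ z_i < 0, then the objective is eventually strictly increasing along γ, so no
finite maximizer exists. -/
theorem stmt2 {N M : ℕ} (x : Fin N → Fin M → ℝ) (y : Fin N → ℝ) (α : ℝ)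
    (hα : 0 < α) (hy : ∀ i, 0 ≤ y i)
    (l : (Fin M → ℝ) → ℝ)
    (hl : ∀ β : Fin M → ℝ, l β =
      ∑ i, (-α * y i * Real.exp (-(∑ m, x i m * β m)) - α * (∑ m, x i m * β m)))
    (γ : Fin M → ℝ) (hγ : γ ≠ 0)
    (z : Fin N → ℝ) (hz : ∀ i, z i = ∑ m, x i m * γ m)
    (hz1 : ∀ i, 0 < y i → 0 ≤ z i)
    (hz2 : (∑ i, z i) < 0) :
    (∀ β : Fin M → ℝ, ∃ K : ℝ,
        StrictMonoOn (fun k : ℝ => l (β + k • γ)) (Set.Ici K)) ∧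
    ¬ ∃ βstar : Fin M → ℝ, ∀ β, l β ≤ l βstar := by
  have key : ∀ (β : Fin M → ℝ) (k : ℝ) (i : Fin N),
      ∑ m, x i m * (β + k • γ) m = (∑ m, x i m * β m) + k * z i := by
    intro β k i
    rw [hz, Finset.mul_sum, ← Finset.sum_add_distrib]
    refine Finset.sum_congr rfl fun m _ => ?_
    simp only [Pi.add_apply, Pi.smul_apply, smul_eq_mul]
    ring
  have hrep : ∀ (β : Fin M → ℝ) (k : ℝ),
      l (β + k • γ) = (∑ i, -α * y i * Real.exp (-((∑ m, x i m * β m) + k * z i)))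
        - α * (∑ i, (∑ m, x i m * β m)) - α * (∑ i, z i) * k := by
    intro β k
    rw [hl]
    have h1 : ∀ i : Fin N,
        (-α * y i * Real.exp (-(∑ m, x i m * (β + k • γ) m))
          - α * (∑ m, x i m * (β + k • γ) m))
        = -α * y i * Real.exp (-((∑ m, x i m * β m) + k * z i))
          - α * ((∑ m, x i m * β m) + k * z i) := by
      intro i; rw [key]
    rw [Finset.sum_congr rfl fun i _ => h1 i, Finset.sum_sub_distrib]
    have h2 : ∑ i, α * ((∑ m, x i m * β m) + k * z i)
        = α * (∑ i, ∑ m, x i m * β m) + α * (∑ i, z i) * k := by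
      rw [← Finset.mul_sum, Finset.sum_add_distrib, ← Finset.mul_sum]
      ring
    rw [h2]; ring
  have hT : ∀ (β : Fin M → ℝ) (k1 k2 : ℝ), k1 ≤ k2 →
      (∑ i, -α * y i * Real.exp (-((∑ m, x i m * β m) + k1 * z i)))
      ≤ ∑ i, -α * y i * Real.exp (-((∑ m, x i m * β m) + k2 * z i)) := by
    intro β k1 k2 h12
    refine Finset.sum_le_sum fun i _ => ?_
    rcases (hy i).eq_or_lt with h | h
    · rw [← h]; simp
    · have hzi := hz1 i h
      have hE : Real.exp (-((∑ m, x i m * β m) + k2 * z i))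
          ≤ Real.exp (-((∑ m, x i m * β m) + k1 * z i)) := by
        apply Real.exp_le_exp.mpr
        nlinarith
      nlinarith [mul_le_mul_of_nonneg_left hE (le_of_lt (mul_pos hα h))]
  constructor
  · intro β
    refine ⟨0, ?_⟩
    intro k1 _ k2 _ h12
    show l (β + k1 • γ) < l (β + k2 • γ)
    rw [hrep, hrep]
    have hT' := hT β k1 k2 h12.le
    have hS : α * (∑ i, z i) < 0 := mul_neg_of_pos_of_neg hα hz2
    nlinarith
  · rintro ⟨βs, hmax⟩
    set a : Fin N → ℝ := fun i => ∑ m, x i m * βs m with ha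
    set S := ∑ i, z i with hSdef
    set C := ∑ i, α * y i * Real.exp (-(a i)) with hC
    set A := ∑ i, a i with hA
    have hS : α * S < 0 := mul_neg_of_pos_of_neg hα hz2
    set k := max 0 ((l βs + C + α * A + 1) / (-(α * S))) with hk
    have hk0 : (0 : ℝ) ≤ k := le_max_left _ _
    have hbound : -C - α * A - α * S * k ≤ l (βs + k • γ) := by
      rw [hrep]
      have hTk : -C ≤ ∑ i, -α * y i * Real.exp (-(a i + k * z i)) := by
        have hC' : -C = ∑ i, -(α * y i * Real.exp (-(a i))) := by
          rw [hC, ← Finset.sum_neg_distrib]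
        rw [hC']
        refine Finset.sum_le_sum fun i _ => ?_
        rcases (hy i).eq_or_lt with h | h
        · rw [← h]; simp
        · have hzi := hz1 i h
          have hE : Real.exp (-(a i + k * z i)) ≤ Real.exp (-(a i)) := by
            apply Real.exp_le_exp.mpr
            nlinarith
          nlinarith [mul_le_mul_of_nonneg_left hE (le_of_lt (mul_pos hα h))]
      have : (∑ i, -α * y i * Real.exp (-(a i + k * z i)))
          = ∑ i, -α * y i * Real.exp (-((∑ m, x i m * βs m) + k * z i)) := rfl
      linarith [hTk]
    have hklarge : l βs + C + α * A + 1 ≤ -(α * S) * k := by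
      have h1 : (l βs + C + α * A + 1) / (-(α * S)) ≤ k := le_max_right _ _
      have h2 : (0 : ℝ) < -(α * S) := by linarith
      have := (div_le_iff₀ h2).mp h1
      linarith [this]
    have := hmax (βs + k • γ)
    linarith
end

section
/- For the Gamma PML objective, if z_i = x_iγ ≥ 0 for all i with y_i > 0, Σ_i z_i = 0, and z_i > 0 for at least one observation with y_i > 0, then dl(β + kγ)/dk = Σ_{z_i>0} α y_i exp(−x_iβ − k z_i) z_i > 0 for all k, so the pseudo-likelihood has no finite maximizer. -/
/-! Along the line `β + kγ` each summand of `l` depends on `k` only through `x_iβ + k z_i`, so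
the derivative in `k` is `Σ α y_i exp(−x_iβ − k z_i) z_i − α Σ z_i`. The linear part vanishes
because `Σ z_i = 0`, the terms with `z_i ≤ 0` vanish because there `y_i = 0`, and the remaining
terms are nonnegative with one strictly positive. So `l` strictly increases along every such
line and has no maximizer. -/

open Real Finset

lemma sum_mul_add_smul {ι : Type*} [Fintype ι] (x β γ : ι → ℝ) (k : ℝ) :
    ∑ m, x m * (β + k • γ) m = ∑ m, x m * β m + k * ∑ m, x m * γ m := by
  simp only [Pi.add_apply, Pi.smul_apply, smul_eq_mul, mul_add, sum_add_distrib, mul_sum]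
  congr 1
  exact sum_congr rfl fun m _ => by ring

section Profile

variable {ι : Type*} [Fintype ι] (α : ℝ) (y a z : ι → ℝ)

/-- The Gamma PML objective restricted to a line, with `a i = x_iβ` and `z i = x_iγ`. -/
noncomputable def gammaProfile (k : ℝ) : ℝ :=
  ∑ i, (-α * y i * exp (-(a i + k * z i)) - α * (a i + k * z i))

lemma hasDerivAt_gammaProfile (k : ℝ) :
    HasDerivAt (gammaProfile α y a z)
      (∑ i, α * y i * exp (-(a i + k * z i)) * z i - α * ∑ i, z i) k := by
  rw [mul_sum, ← sum_sub_distrib]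
  refine HasDerivAt.fun_sum fun i _ => ?_
  have hlin : HasDerivAt (fun k : ℝ => a i + k * z i) (1 * z i) k :=
    ((hasDerivAt_id k).mul_const (z i)).const_add (a i)
  have hexp : HasDerivAt (fun k : ℝ => -α * y i * exp (-(a i + k * z i)))
      (-α * y i * (exp (-(a i + k * z i)) * -(1 * z i))) k :=
    (hlin.neg.exp).const_mul (-α * y i)
  convert hexp.fun_sub (hlin.const_mul α) using 1
  ring

variable {y z}

lemma deriv_gammaProfile (hy : ∀ i, 0 ≤ y i) (hz1 : ∀ i, 0 < y i → 0 ≤ z i)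
    (hz2 : ∑ i, z i = 0) (k : ℝ) :
    deriv (gammaProfile α y a z) k =
      ∑ i ∈ univ.filter (fun i => 0 < z i), α * y i * exp (-a i - k * z i) * z i := by
  rw [(hasDerivAt_gammaProfile α y a z k).deriv, hz2, mul_zero, sub_zero]
  simp only [neg_add']
  refine (sum_filter_of_ne fun i _ hne => ?_).symm
  by_contra hzi
  obtain hy0 | hy0 := (hy i).eq_or_lt
  · exact hne (by rw [← hy0]; ring)
  · exact hne (by rw [le_antisymm (not_lt.mp hzi) (hz1 i hy0)]; ring)

lemma sum_filter_pos_gamma_pos (hα : 0 < α) (hy : ∀ i, 0 ≤ y i)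
    (hz3 : ∃ i, 0 < y i ∧ 0 < z i) (k : ℝ) :
    0 < ∑ i ∈ univ.filter (fun i => 0 < z i), α * y i * exp (-a i - k * z i) * z i := by
  obtain ⟨i₀, hyi₀, hzi₀⟩ := hz3
  refine sum_pos' (fun i hi => ?_) ⟨i₀, by simp [hzi₀], by positivity⟩
  have := hy i
  have := (mem_filter.mp hi).2.le
  positivity

end Profile

lemma not_exists_forall_le_of_deriv_line_pos {E : Type*} [AddCommGroup E] [Module ℝ E]
    {f : E → ℝ} {v : E} (hf : ∀ β k, 0 < deriv (fun k : ℝ => f (β + k • v)) k) :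
    ¬ ∃ βstar, ∀ β, f β ≤ f βstar := by
  rintro ⟨βstar, hmax⟩
  have hlt := strictMono_of_deriv_pos (hf βstar) zero_lt_one
  simp only [zero_smul, add_zero, one_smul] at hlt
  exact (hmax (βstar + v)).not_gt hlt

theorem stmt3_general {N M : ℕ} (x : Fin N → Fin M → ℝ) (y : Fin N → ℝ) (α : ℝ)
    (hα : 0 < α) (hy : ∀ i, 0 ≤ y i)
    (l : (Fin M → ℝ) → ℝ)
    (hl : ∀ β : Fin M → ℝ, l β =
      ∑ i, (-α * y i * Real.exp (-(∑ m, x i m * β m)) - α * (∑ m, x i m * β m)))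
    (γ : Fin M → ℝ)
    (z : Fin N → ℝ) (hz : ∀ i, z i = ∑ m, x i m * γ m)
    (hz1 : ∀ i, 0 < y i → 0 ≤ z i)
    (hz2 : (∑ i, z i) = 0)
    (hz3 : ∃ i, 0 < y i ∧ 0 < z i) :
    (∀ β : Fin M → ℝ, ∀ k : ℝ,
        deriv (fun k : ℝ => l (β + k • γ)) k =
          ∑ i ∈ Finset.univ.filter (fun i => 0 < z i),
            α * y i * Real.exp (-(∑ m, x i m * β m) - k * z i) * z i ∧
        0 < deriv (fun k : ℝ => l (β + k • γ)) k) ∧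
    ¬ ∃ βstar : Fin M → ℝ, ∀ β, l β ≤ l βstar := by
  have hline (β : Fin M → ℝ) :
      (fun k : ℝ => l (β + k • γ)) = gammaProfile α y (fun i => ∑ m, x i m * β m) z := by
    funext k
    simp only [hl, gammaProfile, sum_mul_add_smul, hz]
  have hderiv (β : Fin M → ℝ) (k : ℝ) := hline β ▸ deriv_gammaProfile α _ hy hz1 hz2 k
  have hpos (β : Fin M → ℝ) (k : ℝ) : 0 < deriv (fun k : ℝ => l (β + k • γ)) k :=
    hderiv β k ▸ sum_filter_pos_gamma_pos α _ hα hy hz3 k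
  exact ⟨fun β k => ⟨hderiv β k, hpos β k⟩, not_exists_forall_le_of_deriv_line_pos hpos⟩

/-- Gamma PML non-existence, knife-edge case: if z = Xγ ≥ 0 on y > 0, Σ z_i = 0,
and z_i > 0 for some observation with y_i > 0, then the directional derivative
equals Σ_{z_i>0} α y_i exp(−x_iβ − k z_i) z_i > 0 for every k, so no finite
maximizer exists. -/
theorem stmt3 {N M : ℕ} (x : Fin N → Fin M → ℝ) (y : Fin N → ℝ) (α : ℝ)
    (hα : 0 < α) (hy : ∀ i, 0 ≤ y i)
    (l : (Fin M → ℝ) → ℝ)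
    (hl : ∀ β : Fin M → ℝ, l β =
      ∑ i, (-α * y i * Real.exp (-(∑ m, x i m * β m)) - α * (∑ m, x i m * β m)))
    (γ : Fin M → ℝ) (hγ : γ ≠ 0)
    (z : Fin N → ℝ) (hz : ∀ i, z i = ∑ m, x i m * γ m)
    (hz1 : ∀ i, 0 < y i → 0 ≤ z i)
    (hz2 : (∑ i, z i) = 0)
    (hz3 : ∃ i, 0 < y i ∧ 0 < z i) :
    (∀ β : Fin M → ℝ, ∀ k : ℝ,
        deriv (fun k : ℝ => l (β + k • γ)) k =
          ∑ i ∈ Finset.univ.filter (fun i => 0 < z i),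
            α * y i * Real.exp (-(∑ m, x i m * β m) - k * z i) * z i ∧
        0 < deriv (fun k : ℝ => l (β + k • γ)) k) ∧
    ¬ ∃ βstar : Fin M → ℝ, ∀ β, l β ≤ l βstar :=
  stmt3_general x y α hα hy l hl γ z hz hz1 hz2 hz3
end

section
/- For the Gamma PML objective, if there exists a nonzero γ with z_i = x_iγ and z_i = 0 for all i with y_i > 0 and Σ_i z_i = 0, then l(β + kγ) = l(β) for every k > 0 and every β, i.e., any maximizer is non-unique. -/
lemma stmt4_key {N M : ℕ} (x : Fin N → Fin M → ℝ) (y : Fin N → ℝ) (α : ℝ)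
    (hy : ∀ i, 0 ≤ y i)
    (l : (Fin M → ℝ) → ℝ)
    (hl : ∀ β : Fin M → ℝ, l β =
      ∑ i, (-α * y i * Real.exp (-(∑ m, x i m * β m)) - α * (∑ m, x i m * β m)))
    (γ : Fin M → ℝ)
    (z : Fin N → ℝ) (hz : ∀ i, z i = ∑ m, x i m * γ m)
    (hz1 : ∀ i, 0 < y i → z i = 0)
    (hz2 : (∑ i, z i) = 0) :
    ∀ β : Fin M → ℝ, ∀ k : ℝ, l (β + k • γ) = l β := by
  intro β k
  have hxi : ∀ i, (∑ m, x i m * (β + k • γ) m) = (∑ m, x i m * β m) + k * z i := by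
    intro i
    rw [hz]
    simp only [Pi.add_apply, Pi.smul_apply, smul_eq_mul, Finset.mul_sum]
    rw [← Finset.sum_add_distrib]
    congr 1; ext m; ring
  rw [hl, hl]
  have hterm : ∀ i : Fin N,
      (-α * y i * Real.exp (-(∑ m, x i m * (β + k • γ) m)) - α * (∑ m, x i m * (β + k • γ) m))
      = (-α * y i * Real.exp (-(∑ m, x i m * β m)) - α * (∑ m, x i m * β m)) - α * (k * z i) := by
    intro i
    rw [hxi i]
    by_cases hyi : 0 < y i
    · rw [hz1 i hyi]; ring_nf
    · have h0 : y i = 0 := le_antisymm (not_lt.mp hyi) (hy i)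
      rw [h0]; ring
  calc ∑ i, (-α * y i * Real.exp (-(∑ m, x i m * (β + k • γ) m)) - α * (∑ m, x i m * (β + k • γ) m))
      = ∑ i, ((-α * y i * Real.exp (-(∑ m, x i m * β m)) - α * (∑ m, x i m * β m)) - α * (k * z i)) := by
        exact Finset.sum_congr rfl (fun i _ => hterm i)
    _ = (∑ i, (-α * y i * Real.exp (-(∑ m, x i m * β m)) - α * (∑ m, x i m * β m))) - α * k * (∑ i, z i) := by
        rw [Finset.sum_sub_distrib, Finset.mul_sum]
        congr 1; exact Finset.sum_congr rfl (fun i _ => by ring)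
    _ = _ := by rw [hz2]; ring

/-- Gamma PML non-uniqueness: if z = Xγ vanishes on all observations with
y_i > 0 and Σ z_i = 0, then l(β + kγ) = l(β) for every k > 0 and every β, so
any maximizer is non-unique. -/
theorem stmt4 {N M : ℕ} (x : Fin N → Fin M → ℝ) (y : Fin N → ℝ) (α : ℝ)
    (hα : 0 < α) (hy : ∀ i, 0 ≤ y i)
    (l : (Fin M → ℝ) → ℝ)
    (hl : ∀ β : Fin M → ℝ, l β =
      ∑ i, (-α * y i * Real.exp (-(∑ m, x i m * β m)) - α * (∑ m, x i m * β m)))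
    (γ : Fin M → ℝ) (hγ : γ ≠ 0)
    (z : Fin N → ℝ) (hz : ∀ i, z i = ∑ m, x i m * γ m)
    (hz1 : ∀ i, 0 < y i → z i = 0)
    (hz2 : (∑ i, z i) = 0) :
    (∀ β : Fin M → ℝ, ∀ k : ℝ, 0 < k → l (β + k • γ) = l β) ∧
    (∀ βstar : Fin M → ℝ, (∀ β, l β ≤ l βstar) →
        ∃ β' : Fin M → ℝ, β' ≠ βstar ∧ ∀ β, l β ≤ l β') := by
  have key := stmt4_key x y α hy l hl γ z hz hz1 hz2
  refine ⟨fun β k _ => key β k, fun βstar hmax => ⟨βstar + (1:ℝ) • γ, ?_, ?_⟩⟩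
  · intro h
    apply hγ
    have : (1:ℝ) • γ = 0 := by
      have := congrArg (fun v => v - βstar) h
      simpa [add_sub_cancel_left] using this
    simpa using this
  · intro β
    rw [key βstar 1]
    exact hmax β
end

section
/- For the Inverse Gaussian PML objective l(β) = Σ_i [−α (y_i/2) exp(−2x_iβ) + α exp(−x_iβ)], if there exists a nonzero γ with x_iγ ≥ 0 for all i with y_i > 0 and x_iγ < 0 for at least one i with y_i = 0, then l(β + kγ) → +∞ as k → ∞, so no finite maximizer exists. -/
/-- Inverse Gaussian PML non-existence: if x_iγ ≥ 0 on all observations with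
y_i > 0 and x_iγ < 0 for some observation with y_i = 0, then the objective
tends to +∞ along γ, so no finite maximizer exists. -/
theorem stmt5 {N M : ℕ} (x : Fin N → Fin M → ℝ) (y : Fin N → ℝ) (α : ℝ)
    (hα : 0 < α) (hy : ∀ i, 0 ≤ y i)
    (l : (Fin M → ℝ) → ℝ)
    (hl : ∀ β : Fin M → ℝ, l β =
      ∑ i, (-α * (y i / 2) * Real.exp (-2 * (∑ m, x i m * β m))
            + α * Real.exp (-(∑ m, x i m * β m))))
    (γ : Fin M → ℝ) (hγ : γ ≠ 0)
    (hz1 : ∀ i, 0 < y i → 0 ≤ ∑ m, x i m * γ m)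
    (hz2 : ∃ i, y i = 0 ∧ (∑ m, x i m * γ m) < 0) :
    (∀ β : Fin M → ℝ,
        Filter.Tendsto (fun k : ℝ => l (β + k • γ)) Filter.atTop Filter.atTop) ∧
    ¬ ∃ βstar : Fin M → ℝ, ∀ β, l β ≤ l βstar := by
  obtain ⟨i0, hyi0, hdi0⟩ := hz2
  have main : ∀ β : Fin M → ℝ,
      Filter.Tendsto (fun k : ℝ => l (β + k • γ)) Filter.atTop Filter.atTop := by
    intro β
    set b : Fin N → ℝ := fun i => ∑ m, x i m * β m with hb
    set d : Fin N → ℝ := fun i => ∑ m, x i m * γ m with hd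
    have hsum : ∀ (i : Fin N) (k : ℝ),
        (∑ m, x i m * (β + k • γ) m) = b i + k * d i := by
      intro i k
      simp only [Pi.add_apply, Pi.smul_apply, smul_eq_mul, hb, hd,
        Finset.mul_sum]
      rw [← Finset.sum_add_distrib]
      congr 1; ext m; ring
    set C : ℝ := ∑ i, -α * (y i / 2) * Real.exp (-2 * b i) with hC
    have lower : ∀ k : ℝ, 0 ≤ k →
        C + α * Real.exp (-(b i0 + k * d i0)) ≤ l (β + k • γ) := by
      intro k hk
      rw [hl]
      have step : ∀ i : Fin N,
          (-α * (y i / 2) * Real.exp (-2 * b i)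
            + (if i = i0 then α * Real.exp (-(b i0 + k * d i0)) else 0))
          ≤ -α * (y i / 2) * Real.exp (-2 * (∑ m, x i m * (β + k • γ) m))
            + α * Real.exp (-(∑ m, x i m * (β + k • γ) m)) := by
        intro i
        rw [hsum]
        by_cases hi : i = i0
        · subst hi
          simp only [if_pos rfl, hyi0]
          have : -α * (0 / 2) * Real.exp (-2 * b i) = 0 := by ring
          rw [this]
          have : -α * (0 / 2) * Real.exp (-2 * (b i + k * d i)) = 0 := by ring
          rw [this]
          simp
        · simp only [if_neg hi, add_zero]
          rcases eq_or_lt_of_le (hy i) with h0 | h0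
          · have e1 : -α * (y i / 2) * Real.exp (-2 * b i) = 0 := by
              rw [← h0]; ring
            have e2 : -α * (y i / 2) * Real.exp (-2 * (b i + k * d i)) = 0 := by
              rw [← h0]; ring
            rw [e1, e2]
            positivity
          · have hdi : 0 ≤ d i := hz1 i h0
            have h1 : Real.exp (-2 * (b i + k * d i)) ≤ Real.exp (-2 * b i) := by
              apply Real.exp_le_exp.2
              nlinarith [mul_nonneg hk hdi]
            have h2 : 0 ≤ α * Real.exp (-(b i + k * d i)) := by positivity
            have h3 : α * (y i / 2) * Real.exp (-2 * (b i + k * d i))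
                ≤ α * (y i / 2) * Real.exp (-2 * b i) :=
              mul_le_mul_of_nonneg_left h1 (by positivity)
            linarith
      calc C + α * Real.exp (-(b i0 + k * d i0))
          = ∑ i, (-α * (y i / 2) * Real.exp (-2 * b i)
              + (if i = i0 then α * Real.exp (-(b i0 + k * d i0)) else 0)) := by
            rw [Finset.sum_add_distrib, Finset.sum_ite_eq' Finset.univ i0,
              if_pos (Finset.mem_univ i0), hC]
        _ ≤ _ := Finset.sum_le_sum fun i _ => step i
    have haux : Filter.Tendsto
        (fun k : ℝ => C + α * Real.exp (-(b i0 + k * d i0)))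
        Filter.atTop Filter.atTop := by
      apply Filter.tendsto_atTop_add_const_left
      apply Filter.Tendsto.const_mul_atTop hα
      apply Real.tendsto_exp_atTop.comp
      have heq : (fun k : ℝ => -(b i0 + k * d i0))
          = fun k : ℝ => k * (-d i0) + (-(b i0)) := by
        ext k; ring
      rw [heq]
      exact Filter.tendsto_atTop_add_const_right _ _
        (Filter.Tendsto.atTop_mul_const (by linarith) Filter.tendsto_id)
    apply Filter.tendsto_atTop_mono' _ _ haux
    filter_upwards [Filter.eventually_ge_atTop (0 : ℝ)] with k hk
    exact lower k hk
  refine ⟨main, ?_⟩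
  rintro ⟨βstar, hmax⟩
  obtain ⟨k, hk⟩ := ((main βstar).eventually_gt_atTop (l βstar)).exists
  exact absurd (hmax (βstar + k • γ)) (not_le.2 hk)
end

section
/- In the iterative rectifier algorithm, the weighted residual sums of squares SSR^(k) across iterations satisfy Σ_{k=1}^∞ SSR^(k) ≤ Σ_{i: y_i=0} 1 (the number of boundary observations), and hence SSR^(k) → 0 as k → ∞. -/
/-- Convergence of the iterative rectifier algorithm: the residual sums of
squares across iterations sum to at most the number of boundary (y_i = 0)
observations, hence SSR tends to 0. -/
theorem stmt11 {N : ℕ} (y : Fin N → ℝ) (hy : ∀ i, 0 ≤ y i)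
    (u uhat : ℕ → Fin N → ℝ)
    (hinit : ∀ i, u 0 i = if y i = 0 then -1 else 0)
    (hinterp : ∀ k i, 0 < y i → uhat k i = 0)
    (horth : ∀ k, ∑ i, uhat k i * (u k i - uhat k i) = 0)
    (hupdate : ∀ k i, u (k + 1) i = min (uhat k i) 0)
    (SSR : ℕ → ℝ)
    (hSSR : ∀ k, SSR k = ∑ i, (u k i - uhat k i) ^ 2) :
    (∀ n : ℕ, (∑ k ∈ Finset.range n, SSR k) ≤
        ((Finset.univ.filter (fun i => y i = 0)).card : ℝ)) ∧
    Filter.Tendsto SSR Filter.atTop (nhds 0) := by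
  set S : ℕ → ℝ := fun k => ∑ i, u k i ^ 2 with hSdef
  set T : ℕ → ℝ := fun k => ∑ i, uhat k i ^ 2 with hTdef
  have hform : ∀ k, SSR k = S k - T k := by
    intro k
    have hpt : ∀ i : Fin N, (u k i - uhat k i) ^ 2
        = u k i ^ 2 - uhat k i ^ 2 - 2 * (uhat k i * (u k i - uhat k i)) := by
      intro i; ring
    calc SSR k = ∑ i, (u k i - uhat k i) ^ 2 := hSSR k
      _ = ∑ i, (u k i ^ 2 - uhat k i ^ 2 - 2 * (uhat k i * (u k i - uhat k i))) := by
          exact Finset.sum_congr rfl fun i _ => hpt i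
      _ = S k - T k - 2 * ∑ i, uhat k i * (u k i - uhat k i) := by
          simp [hSdef, hTdef, Finset.sum_sub_distrib, Finset.mul_sum]
      _ = S k - T k := by rw [horth k]; ring
  have hstep : ∀ k, S (k + 1) ≤ T k := by
    intro k
    apply Finset.sum_le_sum
    intro i _
    rw [hupdate k i]
    rcases le_or_gt (uhat k i) 0 with h | h
    · rw [min_eq_left h]
    · rw [min_eq_right h.le]
      simpa using sq_nonneg (uhat k i)
  have hSnonneg : ∀ k, 0 ≤ S k := fun k =>
    Finset.sum_nonneg fun i _ => sq_nonneg _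
  have hS0 : S 0 = ((Finset.univ.filter (fun i => y i = 0)).card : ℝ) := by
    have : S 0 = ∑ i, (if y i = 0 then (1 : ℝ) else 0) := by
      apply Finset.sum_congr rfl
      intro i _
      rw [hinit i]
      by_cases h : y i = 0 <;> simp [h]
    rw [this, Finset.sum_boole]
  have hkey : ∀ n, (∑ k ∈ Finset.range n, SSR k) + S n ≤ S 0 := by
    intro n
    induction n with
    | zero => simp
    | succ n ih =>
        rw [Finset.sum_range_succ]
        have h1 := hstep n
        have h2 := hform n
        linarith
  have hbound : ∀ n : ℕ, (∑ k ∈ Finset.range n, SSR k) ≤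
      ((Finset.univ.filter (fun i => y i = 0)).card : ℝ) := by
    intro n
    have := hkey n
    have := hSnonneg n
    linarith [hS0 ▸ hkey n]
  refine ⟨hbound, ?_⟩
  have hnonneg : ∀ k, 0 ≤ SSR k := by
    intro k; rw [hSSR k]; exact Finset.sum_nonneg fun i _ => sq_nonneg _
  exact (summable_of_sum_range_le hnonneg hbound).tendsto_atTop_zero
end

section
/- A binary-outcome dataset is separated (there exists nonzero γ with x_iγ ≥ 0 for y_i = 1, x_iγ ≤ 0 for y_i = 0, and x_iγ ≠ 0 for some i) if and only if the Logit-equivalent Poisson dataset is separated in the Poisson sense (there exists a nonzero vector (c, γ) over the fixed-effect dummies and x-coefficients with δ-component c_i and slope γ such that c_i + x_{i,a}γ = 0 whenever y_{i,a} > 0 and c_i + x_{i,a}γ ≤ 0 whenever y_{i,a} = 0, with strict inequality somewhere). -/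
/-- Equivalence under separation: a binary-outcome dataset is separated if and
only if its Logit-equivalent Poisson dataset (with pair dummies and an
artificial observation per original observation) is separated in the Poisson
sense. -/
theorem stmt15 {N M : ℕ} (x : Fin N → Fin M → ℝ) (y : Fin N → ℝ)
    (hy : ∀ i, y i = 0 ∨ y i = 1) :
    (∃ γ : Fin M → ℝ, γ ≠ 0 ∧
        (∀ i, y i = 1 → 0 ≤ ∑ m, x i m * γ m) ∧
        (∀ i, y i = 0 → (∑ m, x i m * γ m) ≤ 0) ∧
        (∃ i, (∑ m, x i m * γ m) ≠ 0)) ↔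
    (∃ (c : Fin N → ℝ) (γ : Fin M → ℝ), ¬(c = 0 ∧ γ = 0) ∧
        (∀ i, ∀ a : Fin 2,
            0 < (if a = 0 then y i else 1 - y i) →
            c i + (if a = 0 then ∑ m, x i m * γ m else 0) = 0) ∧
        (∀ i, ∀ a : Fin 2,
            (if a = 0 then y i else 1 - y i) = 0 →
            c i + (if a = 0 then ∑ m, x i m * γ m else 0) ≤ 0) ∧
        (∃ i, ∃ a : Fin 2,
            c i + (if a = 0 then ∑ m, x i m * γ m else 0) ≠ 0)) := by
  constructor
  · rintro ⟨γ, hγ, hpos, hneg, i0, hi0⟩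
    refine ⟨fun i => if y i = 1 then -(∑ m, x i m * γ m) else 0, γ, ?_, ?_, ?_, ?_⟩
    · rintro ⟨-, rfl⟩; exact hγ rfl
    · intro i a ha
      fin_cases a <;> simp at ha ⊢
      · have h1 : y i = 1 := by
          rcases hy i with h | h
          · exact absurd ha (by simp [h])
          · exact h
        simp [h1]
      · have h0 : y i = 0 := by
          rcases hy i with h | h
          · exact h
          · exact absurd ha (by simp [h])
        simp [h0]
    · intro i a ha
      fin_cases a <;> simp at ha ⊢
      · have h0 : y i = 0 := by
          rcases hy i with h | h
          · exact h
          · exact absurd ha (by simp [h])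
        simp [h0]
        exact hneg i h0
      · have h1 : y i = 1 := by
          rcases hy i with h | h
          · exact absurd ha (by simp [h])
          · exact h
        simp [h1]
        linarith [hpos i h1]
    · rcases hy i0 with h | h
      · exact ⟨i0, 0, by simpa [h] using hi0⟩
      · exact ⟨i0, 1, by simpa [h] using hi0⟩
  · rintro ⟨c, γ, hne, hpos, hneg, i0, a0, hi0⟩
    have key1 : ∀ i, y i = 1 → c i + ∑ m, x i m * γ m = 0 := by
      intro i h
      have := hpos i 0 (by simp [h])
      simpa using this
    have key1' : ∀ i, y i = 1 → c i ≤ 0 := by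
      intro i h
      have := hneg i 1 (by simp [h])
      simpa using this
    have key0 : ∀ i, y i = 0 → c i = 0 := by
      intro i h
      have := hpos i 1 (by simp [h])
      simpa using this
    have key0' : ∀ i, y i = 0 → c i + ∑ m, x i m * γ m ≤ 0 := by
      intro i h
      have := hneg i 0 (by simp [h])
      simpa using this
    have hstrict : ∃ i, (∑ m, x i m * γ m) ≠ 0 := by
      refine ⟨i0, ?_⟩
      fin_cases a0 <;> simp only [reduceIte] at hi0
      · rcases hy i0 with h | h
        · rw [key0 i0 h] at hi0; simpa using hi0
        · exact absurd (key1 i0 h) hi0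
      · rcases hy i0 with h | h
        · exact absurd (key0 i0 h) (by simpa using hi0)
        · intro hs
          have := key1 i0 h
          rw [hs] at this
          simp at this hi0
          exact hi0 this
    have hγ : γ ≠ 0 := by
      rintro rfl
      obtain ⟨i, hi⟩ := hstrict
      simp at hi
    refine ⟨γ, hγ, ?_, ?_, hstrict⟩
    · intro i h; linarith [key1 i h, key1' i h]
    · intro i h; have := key0' i h; rw [key0 i h] at this; linarith
end

section
/- For the Poisson log-likelihood l(β) = Σ_i [y_i x_iβ − exp(x_iβ)], if γ is a nonzero vector with x_iγ ≠ 0 for at least one observation with y_i > 0, then l(β + kγ) → −∞ as k → ∞ for every β. -/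
/-!
With `y ≥ 0`, each term `y t - exp t` of the likelihood is bounded above (by `y log y - y`), and when
`y > 0` it tends to `-∞` as `|t| → ∞`. Along the ray `β + k γ` the linear predictor of an observation
with `y > 0` and `x γ ≠ 0` is a nonconstant affine function of `k`, so that one term drives the sum
to `-∞` while all the others stay bounded above.
-/

open Filter Real

lemma mul_sub_exp_le {y : ℝ} (hy : 0 ≤ y) (t : ℝ) : y * t - exp t ≤ y * log y - y := by
  rcases hy.eq_or_lt with rfl | hy
  · simp [(exp_pos t).le]
  · have h := mul_le_mul_of_nonneg_left (add_one_le_exp (t - log y)) hy.le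
    rw [exp_sub, exp_log hy, mul_div_cancel₀ _ hy.ne'] at h
    linarith

lemma tendsto_mul_sub_exp_atTop {y : ℝ} (hy : 0 < y) :
    Tendsto (fun t => y * t - exp t) atTop atBot := by
  -- split `exp t` in halves: one half absorbs `y t`, the other diverges
  have h : Tendsto (fun t => (2 * y * log (2 * y) - 2 * y) / 2 - exp t / 2) atTop atBot :=
    tendsto_atBot_add_const_left _ _ <|
      tendsto_neg_atTop_atBot.comp (tendsto_exp_atTop.atTop_div_const two_pos) |>.congr
        fun t => by simp
  refine tendsto_atBot_mono (fun t => ?_) h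
  linarith [mul_sub_exp_le (by positivity : 0 ≤ 2 * y) t]

lemma tendsto_mul_sub_exp_atBot {y : ℝ} (hy : 0 < y) :
    Tendsto (fun t => y * t - exp t) atBot atBot :=
  tendsto_atBot_mono (fun t => by simpa using (exp_pos t).le) (tendsto_id.const_mul_atBot hy)

lemma tendsto_mul_sub_exp_cocompact {y : ℝ} (hy : 0 < y) :
    Tendsto (fun t => y * t - exp t) (cocompact ℝ) atBot := by
  rw [cocompact_eq_atBot_atTop]
  exact (tendsto_mul_sub_exp_atBot hy).sup (tendsto_mul_sub_exp_atTop hy)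

lemma tendsto_const_add_mul_cocompact (a : ℝ) {b : ℝ} (hb : b ≠ 0) :
    Tendsto (fun k => a + k * b) atTop (cocompact ℝ) := by
  rcases hb.lt_or_gt with hb | hb
  · exact (tendsto_atBot_add_const_left _ a (tendsto_id.atTop_mul_const_of_neg hb)).mono_right
      atBot_le_cocompact
  · exact (tendsto_atTop_add_const_left _ a (tendsto_id.atTop_mul_const hb)).mono_right
      atTop_le_cocompact

lemma Finset.tendsto_sum_atBot_of_bddAbove {ι α G : Type*} [Fintype ι] [AddCommGroup G]
    [PartialOrder G] [IsOrderedAddMonoid G] {l : Filter α} {f : ι → α → G} (i₀ : ι) (h₀ : Tendsto (f i₀) l atBot)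
    (hbdd : ∀ i, ∃ C, ∀ a, f i a ≤ C) :
    Tendsto (fun a => ∑ i, f i a) l atBot := by
  classical
  choose C hC using hbdd
  simp_rw [← Finset.add_sum_erase _ _ (Finset.mem_univ i₀)]
  exact tendsto_atBot_add_right_of_ge _ _ h₀ fun a => Finset.sum_le_sum fun i _ => hC i a

theorem stmt18_general {N M : ℕ} (x : Fin N → Fin M → ℝ) (y : Fin N → ℝ)
    (hy : ∀ i, 0 ≤ y i)
    (l : (Fin M → ℝ) → ℝ)
    (hl : ∀ β : Fin M → ℝ, l β =
      ∑ i, (y i * (∑ m, x i m * β m) - Real.exp (∑ m, x i m * β m)))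
    (γ : Fin M → ℝ)
    (hne : ∃ i, 0 < y i ∧ (∑ m, x i m * γ m) ≠ 0) :
    ∀ β : Fin M → ℝ,
      Filter.Tendsto (fun k : ℝ => l (β + k • γ)) Filter.atTop Filter.atBot := by
  intro β
  obtain ⟨i₀, hy₀, hγ₀⟩ := hne
  have hpred : ∀ (k : ℝ) i, ∑ m, x i m * (β + k • γ) m
      = ∑ m, x i m * β m + k * ∑ m, x i m * γ m := by
    intro k i
    simp only [Pi.add_apply, Pi.smul_apply, smul_eq_mul, mul_add, Finset.sum_add_distrib,
      Finset.mul_sum, mul_left_comm]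
  simp_rw [hl, hpred]
  refine Finset.tendsto_sum_atBot_of_bddAbove i₀ ?_ fun i => ⟨_, fun k => mul_sub_exp_le (hy i) _⟩
  exact (tendsto_mul_sub_exp_cocompact hy₀).comp (tendsto_const_add_mul_cocompact _ hγ₀)

/-- Poisson log-likelihood tends to −∞ along any nonzero direction γ with
x_iγ ≠ 0 for at least one observation with y_i > 0. -/
theorem stmt18 {N M : ℕ} (x : Fin N → Fin M → ℝ) (y : Fin N → ℝ)
    (hy : ∀ i, 0 ≤ y i)
    (l : (Fin M → ℝ) → ℝ)
    (hl : ∀ β : Fin M → ℝ, l β =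
      ∑ i, (y i * (∑ m, x i m * β m) - Real.exp (∑ m, x i m * β m)))
    (γ : Fin M → ℝ) (hγ : γ ≠ 0)
    (hne : ∃ i, 0 < y i ∧ (∑ m, x i m * γ m) ≠ 0) :
    ∀ β : Fin M → ℝ,
      Filter.Tendsto (fun k : ℝ => l (β + k • γ)) Filter.atTop Filter.atBot :=
  stmt18_general x y hy l hl γ hne
end

section
/- For the Inverse Gaussian PML objective, if γ is nonzero with z_i = x_iγ ≥ 0 for all i, then all three terms of dl(β + kγ)/dk = −α Σ_{y_i=0} exp(−x_iβ − k z_i) z_i + α Σ_{y_i>0} y_i exp(−2x_iβ − 2k z_i) z_i − α Σ_{y_i>0} exp(−x_iβ − k z_i) z_i tend to 0 as k → ∞, and the derivative is negative for all sufficiently large k whenever z_i > 0 for at least one observation with y_i > 0. -/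
/-!
With `u = exp (-s - k z) → 0`, every term of the derivative is a finite sum of multiples of
`u z`, hence tends to `0`. The quadratic term is `y u² z = o(u z)`, so for large `k` each summand
over `y > 0` is `≤ 0`, strictly at an index with `y > 0` and `z > 0`, while the sum over `y = 0`
contributes with a nonpositive sign.
-/

open Filter Real Topology

lemma tendsto_exp_sub_mul_mul_atTop (a : ℝ) {b c : ℝ} (hb : 0 < b) (hc : 0 ≤ c) :
    Tendsto (fun k : ℝ => exp (a - b * k * c) * c) atTop (𝓝 0) := by
  rcases hc.eq_or_lt with rfl | hc
  · simp
  have h : Tendsto (fun k : ℝ => a - b * k * c) atTop atBot :=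
    tendsto_atBot_add_const_left _ a <| tendsto_neg_atTop_atBot.comp <|
      (tendsto_id.const_mul_atTop hb).atTop_mul_const hc
  simpa using (tendsto_exp_atBot.comp h).mul_const c

lemma eventually_mul_exp_two_mul_lt_exp (y s : ℝ) {c : ℝ} (hc : 0 < c) :
    ∀ᶠ k : ℝ in atTop, y * exp (-2 * s - 2 * k * c) < exp (-s - k * c) := by
  have hu : Tendsto (fun k : ℝ => y * exp (-s - k * c)) atTop (𝓝 0) := by
    simpa [hc.ne'] using
      ((tendsto_exp_sub_mul_mul_atTop (-s) one_pos hc.le).div_const c).const_mul y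
  filter_upwards [hu.eventually (gt_mem_nhds one_pos)] with k hk
  have hsq : exp (-2 * s - 2 * k * c) = exp (-s - k * c) * exp (-s - k * c) := by
    rw [← exp_add]; ring_nf
  rw [hsq, ← mul_assoc]
  exact mul_lt_of_lt_one_left (exp_pos _) hk

lemma eventually_mul_exp_two_mul_mul_le (y s : ℝ) {c : ℝ} (hc : 0 ≤ c) :
    ∀ᶠ k : ℝ in atTop, y * exp (-2 * s - 2 * k * c) * c ≤ exp (-s - k * c) * c := by
  rcases hc.eq_or_lt with rfl | hc
  · simp
  filter_upwards [eventually_mul_exp_two_mul_lt_exp y s hc] with k hk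
  exact mul_le_mul_of_nonneg_right hk.le hc.le

theorem stmt19_general {N M : ℕ} (x : Fin N → Fin M → ℝ) (y : Fin N → ℝ) (α : ℝ)
    (hα : 0 < α)
    (β : Fin M → ℝ)
    (z : Fin N → ℝ)
    (hz0 : ∀ i, 0 ≤ z i) :
    (Filter.Tendsto (fun k : ℝ =>
        -α * ∑ i ∈ Finset.univ.filter (fun i => y i = 0),
          Real.exp (-(∑ m, x i m * β m) - k * z i) * z i)
      Filter.atTop (nhds 0)) ∧
    (Filter.Tendsto (fun k : ℝ =>
        α * ∑ i ∈ Finset.univ.filter (fun i => 0 < y i),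
          y i * Real.exp (-2 * (∑ m, x i m * β m) - 2 * k * z i) * z i)
      Filter.atTop (nhds 0)) ∧
    (Filter.Tendsto (fun k : ℝ =>
        -α * ∑ i ∈ Finset.univ.filter (fun i => 0 < y i),
          Real.exp (-(∑ m, x i m * β m) - k * z i) * z i)
      Filter.atTop (nhds 0)) ∧
    ((∃ i, 0 < y i ∧ 0 < z i) → ∃ K : ℝ, ∀ k : ℝ, K < k →
        (-α * ∑ i ∈ Finset.univ.filter (fun i => y i = 0),
            Real.exp (-(∑ m, x i m * β m) - k * z i) * z i)
        + (α * ∑ i ∈ Finset.univ.filter (fun i => 0 < y i),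
            y i * Real.exp (-2 * (∑ m, x i m * β m) - 2 * k * z i) * z i)
        + (-α * ∑ i ∈ Finset.univ.filter (fun i => 0 < y i),
            Real.exp (-(∑ m, x i m * β m) - k * z i) * z i) < 0) := by
  set s : Fin N → ℝ := fun i => ∑ m, x i m * β m
  have hlin (t : Finset (Fin N)) :
      Tendsto (fun k : ℝ => ∑ i ∈ t, exp (-s i - k * z i) * z i) atTop (𝓝 0) := by
    simpa using tendsto_finsetSum t fun i _ =>
      tendsto_exp_sub_mul_mul_atTop (-s i) one_pos (hz0 i)
  have hquad (t : Finset (Fin N)) : Tendsto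
      (fun k : ℝ => ∑ i ∈ t, y i * exp (-2 * s i - 2 * k * z i) * z i) atTop (𝓝 0) := by
    simpa [mul_assoc] using tendsto_finsetSum t fun i _ =>
      (tendsto_exp_sub_mul_mul_atTop (-2 * s i) two_pos (hz0 i)).const_mul (y i)
  refine ⟨by simpa using (hlin _).const_mul (-α), by simpa using (hquad _).const_mul α,
    by simpa using (hlin _).const_mul (-α), ?_⟩
  rintro ⟨i₀, hy₀, hz₀⟩
  have hev : ∀ᶠ k : ℝ in atTop, ∑ i ∈ Finset.univ.filter (fun i => 0 < y i),
      y i * exp (-2 * s i - 2 * k * z i) * z i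
        < ∑ i ∈ Finset.univ.filter (fun i => 0 < y i), exp (-s i - k * z i) * z i := by
    filter_upwards [eventually_all.2 fun i => eventually_mul_exp_two_mul_mul_le (y i) (s i) (hz0 i),
      eventually_mul_exp_two_mul_lt_exp (y i₀) (s i₀) hz₀] with k hle hlt
    exact Finset.sum_lt_sum (fun i _ => hle i)
      ⟨i₀, by simpa using hy₀, mul_lt_mul_of_pos_right hlt hz₀⟩
  obtain ⟨K, hK⟩ := eventually_atTop.1 hev
  refine ⟨K, fun k hk => ?_⟩
  have hzero : 0 ≤ ∑ i ∈ Finset.univ.filter (fun i => y i = 0), exp (-s i - k * z i) * z i :=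
    Finset.sum_nonneg fun i _ => mul_nonneg (exp_pos _).le (hz0 i)
  nlinarith [mul_nonneg hα.le hzero, mul_pos hα (sub_pos.2 (hK k hk.le))]

/-- Inverse Gaussian PML: when z = Xγ ≥ 0 componentwise, all three terms of the
directional derivative tend to 0 as k → ∞, and the derivative is negative for
all sufficiently large k whenever z_i > 0 for some observation with y_i > 0. -/
theorem stmt19 {N M : ℕ} (x : Fin N → Fin M → ℝ) (y : Fin N → ℝ) (α : ℝ)
    (hα : 0 < α) (hy : ∀ i, 0 ≤ y i)
    (β γ : Fin M → ℝ) (hγ : γ ≠ 0)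
    (z : Fin N → ℝ) (hz : ∀ i, z i = ∑ m, x i m * γ m)
    (hz0 : ∀ i, 0 ≤ z i) :
    (Filter.Tendsto (fun k : ℝ =>
        -α * ∑ i ∈ Finset.univ.filter (fun i => y i = 0),
          Real.exp (-(∑ m, x i m * β m) - k * z i) * z i)
      Filter.atTop (nhds 0)) ∧
    (Filter.Tendsto (fun k : ℝ =>
        α * ∑ i ∈ Finset.univ.filter (fun i => 0 < y i),
          y i * Real.exp (-2 * (∑ m, x i m * β m) - 2 * k * z i) * z i)
      Filter.atTop (nhds 0)) ∧
    (Filter.Tendsto (fun k : ℝ =>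
        -α * ∑ i ∈ Finset.univ.filter (fun i => 0 < y i),
          Real.exp (-(∑ m, x i m * β m) - k * z i) * z i)
      Filter.atTop (nhds 0)) ∧
    ((∃ i, 0 < y i ∧ 0 < z i) → ∃ K : ℝ, ∀ k : ℝ, K < k →
        (-α * ∑ i ∈ Finset.univ.filter (fun i => y i = 0),
            Real.exp (-(∑ m, x i m * β m) - k * z i) * z i)
        + (α * ∑ i ∈ Finset.univ.filter (fun i => 0 < y i),
            y i * Real.exp (-2 * (∑ m, x i m * β m) - 2 * k * z i) * z i)
        + (-α * ∑ i ∈ Finset.univ.filter (fun i => 0 < y i),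
            Real.exp (-(∑ m, x i m * β m) - k * z i) * z i) < 0) :=
  stmt19_general x y α hα β z hz0
end
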